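/- arXiv:2208.00073 — 4 statements merged into one kernel-verified Lean document; each statement's English description precedes it below -/
import Mathlib

section
/- Geometric form of Proposition 5.1: For every integer n ≥ 2 and every sign function ε : {2, …, n} → {+1, −1}, there exist points Y₁, …, Y_{n+1} ∈ ℂ with Y₁ < Y₂ < ⋯ < Y_{n+1} in the given order, such that the n+1 points are, in a suitable cyclic order, the vertices of a positively convex (n+1)-gon, and for every 2 ≤ i ≤ n the real number Im( conj(Y_i − Y_{i−1}) · (Y_{i+1} − Y_i) ) is nonzero and has sign ε(i). (This realizes every orientation of the type A_n diagram as the intersection quiver of a stable (n+1)-gon.) -/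
noncomputable section

/-- The (strict) total order on `ℂ`: compare imaginary parts first, then real parts. -/
def cLt (a b : ℂ) : Prop := a.im < b.im ∨ (a.im = b.im ∧ a.re < b.re)

/-- The corresponding non-strict order on `ℂ`. -/
def cLe (a b : ℂ) : Prop := cLt a b ∨ a = b

/-- `cross u v = Im (conj u * v)`. -/
def cross (u v : ℂ) : ℝ := ((starRingEnd ℂ) u * v).im

/-- A positively convex `h`-gon: every other vertex lies strictly to the left of each
directed edge from `V (j-1)` to `V j`. -/
def PosConvex {h : ℕ} (V : ZMod h → ℂ) : Prop :=
  ∀ j i : ZMod h, i ≠ j - 1 → i ≠ j →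
    0 < cross (V j - V (j - 1)) (V i - V (j - 1))

/-- The (open) level-`s` diagonal-gon of an `h`-gon. -/
def DiagGon {h : ℕ} (V : ZMod h → ℂ) (s : ℕ) : Set ℂ :=
  {P : ℂ | ∀ j : ZMod h, 0 < cross (V (j + (s : ZMod h)) - V j) (P - V j)}

/-- Edge vectors of an `h`-gon. -/
def zEdge {h : ℕ} (V : ZMod h → ℂ) (j : ZMod h) : ℂ := V j - V (j - 1)

/-!
Points of the unit circle, listed counterclockwise, are the vertices of a positively convex
polygon. So `Y i` is taken on the circle at height `2r/(1+r²)`, `r = i/(n+2)`: on its right half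
if `ε i = 1` and on its left half if `ε i = -1`, since climbing a circle one turns left on the
right half and right on the left half. Everything is computed in the rational parametrization
`P u = ((1-u²)/(1+u²), 2u/(1+u²))`, where the reflection to the left half is `u ↦ u⁻¹` and
`cross (P b - P a) (P c - P a) = 4 (b-a)(c-b)(c-a) / ((1+a²)(1+b²)(1+c²))`.
-/
lemma Fin.cyclic_sub_one {m : ℕ} {i j : Fin (m + 1)} (h₁ : i ≠ j - 1) (h₂ : i ≠ j) :
    (j - 1 < j ∧ j < i) ∨ (j < i ∧ i < j - 1) ∨ (i < j - 1 ∧ j - 1 < j) := by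
  rw [Ne, Fin.ext_iff, Fin.coe_sub_one] at h₁
  rw [Ne, Fin.ext_iff] at h₂
  simp only [Fin.lt_def, Fin.coe_sub_one]
  have := i.isLt
  split_ifs at h₁ ⊢ with hj
  · subst hj; simp only [Fin.val_zero] at *; omega
  · have : j.val ≠ 0 := fun h => hj (Fin.ext h)
    omega

namespace TypeA

lemma cross_eq (u v : ℂ) : cross u v = u.re * v.im - u.im * v.re := by
  simp only [cross, Complex.mul_im, Complex.conj_re, Complex.conj_im]
  ring

lemma cross_sub_self_right (u v : ℂ) : cross u (v - u) = cross u v := by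
  simp only [cross_eq, Complex.sub_re, Complex.sub_im]
  ring

/-- The rational parametrization `u ↦ exp (2 i arctan u)` of the unit circle minus `-1`. -/
def circlePt (u : ℝ) : ℂ := ⟨(1 - u ^ 2) / (1 + u ^ 2), 2 * u / (1 + u ^ 2)⟩

lemma cross_circlePt (a b c : ℝ) :
    cross (circlePt b - circlePt a) (circlePt c - circlePt a) =
      4 * ((b - a) * (c - b) * (c - a)) / ((1 + a ^ 2) * (1 + b ^ 2) * (1 + c ^ 2)) := by
  simp only [cross_eq, circlePt, Complex.sub_re, Complex.sub_im]
  field_simp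
  ring

lemma mul_cross_circlePt_pos_iff (e a b c : ℝ) :
    0 < e * cross (circlePt b - circlePt a) (circlePt c - circlePt a) ↔
      0 < e * ((b - a) * (c - b) * (c - a)) := by
  have hD : 0 < 4 / ((1 + a ^ 2) * (1 + b ^ 2) * (1 + c ^ 2)) := by positivity
  have hsplit : ∀ p : ℝ, e * (4 * p / ((1 + a ^ 2) * (1 + b ^ 2) * (1 + c ^ 2))) =
      e * p * (4 / ((1 + a ^ 2) * (1 + b ^ 2) * (1 + c ^ 2))) := fun p => by ring
  rw [cross_circlePt, hsplit, mul_pos_iff_of_pos_right hD]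

lemma im_circlePt (u : ℝ) : (circlePt u).im = 2 * u / (1 + u ^ 2) := rfl

lemma im_circlePt_sub (x y : ℝ) :
    (circlePt x).im - (circlePt y).im =
      2 * ((x - y) * (1 - x * y)) / ((1 + x ^ 2) * (1 + y ^ 2)) := by
  rw [im_circlePt, im_circlePt]
  field_simp
  ring

lemma im_circlePt_lt_iff {x y : ℝ} :
    (circlePt x).im < (circlePt y).im ↔ 0 < (y - x) * (1 - y * x) := by
  rw [← sub_pos, im_circlePt_sub, div_pos_iff_of_pos_right (by positivity)]
  simp

lemma im_circlePt_inv (u : ℝ) : (circlePt u⁻¹).im = (circlePt u).im := by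
  rcases eq_or_ne u 0 with rfl | hu
  · simp
  · rw [im_circlePt, im_circlePt]
    field_simp
    ring

lemma strictMonoOn_im_circlePt : StrictMonoOn (fun u => (circlePt u).im) (Set.Icc 0 1) := by
  intro x hx y hy hxy
  simp only [Set.mem_Icc] at hx hy
  rw [im_circlePt_lt_iff]
  exact mul_pos (by linarith) (by nlinarith)

lemma mul_turn_circlePt_pos {a b c : ℝ} (hb : 0 < b)
    (hab : (circlePt a).im < (circlePt b).im) (hbc : (circlePt b).im < (circlePt c).im) :
    0 < (1 - b) * cross (circlePt b - circlePt a) (circlePt c - circlePt b) := by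
  rw [← sub_sub_sub_cancel_right (circlePt c) (circlePt b) (circlePt a), cross_sub_self_right,
    mul_cross_circlePt_pos_iff]
  rw [im_circlePt_lt_iff] at hab hbc
  rcases pos_and_pos_or_neg_and_neg_of_mul_pos hab with ⟨hab, hab'⟩ | ⟨hab, hab'⟩ <;>
  rcases pos_and_pos_or_neg_and_neg_of_mul_pos hbc with ⟨hbc, hbc'⟩ | ⟨hbc, hbc'⟩
  · have hb1 : 0 < 1 - b := by nlinarith
    have hac : 0 < c - a := by linarith
    have := mul_pos (mul_pos hb1 hab) (mul_pos hbc hac)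
    linarith
  · have hb1 : 1 - b < 0 := by nlinarith
    have hac : 0 < c - a := by nlinarith
    have := mul_pos (mul_pos_of_neg_of_neg hb1 hbc) (mul_pos hab hac)
    linarith
  · have hb1 : 0 < 1 - b := by nlinarith
    have hac : c - a < 0 := by nlinarith
    have := mul_pos (mul_pos hb1 hbc) (mul_pos_of_neg_of_neg hab hac)
    linarith
  · have hb1 : 1 - b < 0 := by nlinarith
    have hac : c - a < 0 := by linarith
    have := mul_pos (mul_pos_of_neg_of_neg hb1 hab) (mul_pos_of_neg_of_neg hbc hac)
    linarith

lemma mul_pos_of_cyclic {a b c : ℝ}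
    (h : (a < b ∧ b < c) ∨ (b < c ∧ c < a) ∨ (c < a ∧ a < b)) :
    0 < (b - a) * (c - b) * (c - a) := by
  rcases h with ⟨h₁, h₂⟩ | ⟨h₁, h₂⟩ | ⟨h₁, h₂⟩
  · exact mul_pos (mul_pos (by linarith) (by linarith)) (by linarith)
  · exact mul_pos_of_neg_of_neg (mul_neg_of_neg_of_pos (by linarith) (by linarith)) (by linarith)
  · exact mul_pos_of_neg_of_neg (mul_neg_of_pos_of_neg (by linarith) (by linarith)) (by linarith)

lemma posConvex_circlePt {m : ℕ} {w : Fin (m + 1) → ℝ} (hw : StrictMono w) :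
    PosConvex (h := m + 1) fun k => circlePt (w k) := by
  -- `ZMod (m + 1)` is `Fin (m + 1)` by definition
  intro (j : Fin (m + 1)) (i : Fin (m + 1)) h₁ h₂
  have hcyc : 0 < (w j - w (j - 1)) * (w i - w j) * (w i - w (j - 1)) := by
    apply mul_pos_of_cyclic
    rcases Fin.cyclic_sub_one h₁ h₂ with ⟨h, h'⟩ | ⟨h, h'⟩ | ⟨h, h'⟩
    exacts [Or.inl ⟨hw h, hw h'⟩, Or.inr (Or.inl ⟨hw h, hw h'⟩), Or.inr (Or.inr ⟨hw h, hw h'⟩)]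
  rw [← one_mul (cross _ _), mul_cross_circlePt_pos_iff, one_mul]
  exact hcyc

lemma exists_posConvex_circlePt {m : ℕ} (S : Finset ℝ) (hS : S.card = m + 1) :
    ∃ V : ZMod (m + 1) → ℂ, PosConvex V ∧ Set.range V = circlePt '' S := by
  refine ⟨fun k => circlePt (S.orderEmbOfFin hS k),
    posConvex_circlePt (S.orderEmbOfFin hS).strictMono, ?_⟩
  rw [← Finset.range_orderEmbOfFin S hS, ← Set.range_comp]
  rfl

def param (n : ℕ) (ε : ℕ → ℤ) (i : ℕ) : ℝ :=
  if ε i = -1 then ((i : ℝ) / (n + 2))⁻¹ else (i : ℝ) / (n + 2)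

def Y (n : ℕ) (ε : ℕ → ℤ) (i : ℕ) : ℂ := circlePt (param n ε i)

variable {n : ℕ} {ε : ℕ → ℤ}

lemma im_Y (i : ℕ) : (Y n ε i).im = (circlePt ((i : ℝ) / (n + 2))).im := by
  unfold Y param
  split_ifs
  exacts [im_circlePt_inv _, rfl]

lemma strictMonoOn_im_Y : StrictMonoOn (fun i => (Y n ε i).im) (Set.Iic (n + 1)) := by
  intro i hi j hj hij
  simp only [im_Y]
  have mem : ∀ k ∈ Set.Iic (n + 1), (k : ℝ) / (n + 2) ∈ Set.Icc (0 : ℝ) 1 := fun k hk => by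
    have : (k : ℝ) ≤ n + 1 := by exact_mod_cast hk
    constructor <;> [positivity; (rw [div_le_one (by positivity)]; linarith)]
  exact strictMonoOn_im_circlePt (mem i hi) (mem j hj)
    (div_lt_div_of_pos_right (by exact_mod_cast hij) (by positivity))

lemma param_pos {i : ℕ} (hi : 1 ≤ i) : 0 < param n ε i := by
  have : (0 : ℝ) < i := by exact_mod_cast hi
  unfold param
  split_ifs <;> positivity

lemma mul_one_sub_param_pos {i : ℕ} (hi : 1 ≤ i) (hin : i ≤ n + 1)
    (hε : ε i = 1 ∨ ε i = -1) :
    0 < (ε i : ℝ) * (1 - param n ε i) := by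
  have h0 : (0 : ℝ) < i / (n + 2) := by
    have : (0 : ℝ) < i := by exact_mod_cast hi
    positivity
  have h1 : (i : ℝ) / (n + 2) < 1 := by
    have : (i : ℝ) ≤ n + 1 := by exact_mod_cast hin
    rw [div_lt_one (by positivity)]; linarith
  unfold param
  rcases hε with h | h
  · rw [if_neg (by omega), h, Int.cast_one, one_mul]
    linarith
  · rw [if_pos h, h, Int.cast_neg, Int.cast_one, neg_one_mul, neg_pos, sub_neg]
    exact (one_lt_inv₀ h0).2 h1

lemma injOn_param : Set.InjOn (param n ε) (Set.Iic (n + 1)) := fun i hi j hj h =>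
  (strictMonoOn_im_Y (ε := ε)).injOn hi hj (by simp only [Y, h])

lemma card_image_param : ((Finset.Icc 1 (n + 1)).image (param n ε)).card = n + 1 := by
  rw [Finset.card_image_of_injOn, Nat.card_Icc, Nat.add_sub_cancel]
  exact injOn_param.mono fun i hi => (Finset.mem_Icc.1 hi).2

lemma mul_cross_Y_pos {i : ℕ} (hi : 2 ≤ i) (hin : i ≤ n) (hε : ε i = 1 ∨ ε i = -1) :
    0 < (ε i : ℝ) * cross (Y n ε i - Y n ε (i - 1)) (Y n ε (i + 1) - Y n ε i) := by
  have hmono := strictMonoOn_im_Y (n := n) (ε := ε)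
  have hturn := mul_turn_circlePt_pos (param_pos (n := n) (ε := ε) (i := i) (by omega))
    (hmono (Set.mem_Iic.2 (by omega)) (Set.mem_Iic.2 (by omega)) (Nat.sub_lt (by omega) one_pos))
    (hmono (Set.mem_Iic.2 (by omega)) (Set.mem_Iic.2 (by omega)) i.lt_add_one)
  have hside := mul_one_sub_param_pos (n := n) (by omega) (by omega) hε
  -- both `ε i` and the turn at `Y n ε i` have the sign of `1 - param n ε i`
  refine pos_of_mul_pos_right (a := (1 - param n ε i) ^ 2) ?_ (sq_nonneg _)
  convert mul_pos hside hturn using 1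
  simp only [Y]
  ring

end TypeA

theorem typeA_realization_general (n : ℕ) (ε : ℕ → ℤ)
    (hε : ∀ i, 2 ≤ i → i ≤ n → ε i = 1 ∨ ε i = -1) :
    ∃ Y : ℕ → ℂ,
      (∀ i j : ℕ, 1 ≤ i → i < j → j ≤ n + 1 → cLt (Y i) (Y j)) ∧
      (∃ V : ZMod (n + 1) → ℂ, PosConvex V ∧
        Set.range V = Y '' {i : ℕ | 1 ≤ i ∧ i ≤ n + 1}) ∧
      (∀ i, 2 ≤ i → i ≤ n →
        0 < (ε i : ℝ) * cross (Y i - Y (i - 1)) (Y (i + 1) - Y i)) := by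
  open TypeA in
  refine ⟨Y n ε, fun i j _ hij hj => Or.inl ?_, ?_, fun i hi hin => ?_⟩
  · exact strictMonoOn_im_Y (Set.mem_Iic.2 (by omega)) (Set.mem_Iic.2 hj) hij
  · obtain ⟨V, hV, hrange⟩ := exists_posConvex_circlePt _ (card_image_param (ε := ε))
    refine ⟨V, hV, ?_⟩
    rw [hrange, Finset.coe_image, Set.image_image, Finset.coe_Icc]
    rfl
  · exact mul_cross_Y_pos hi hin (hε i hi hin)

/-- Geometric form of Proposition 5.1 (type `A_n`): for every `n ≥ 2` and every sign
function `ε` on `{2,…,n}` there are points `Y 1 < Y 2 < ⋯ < Y (n+1)` in `ℂ` which, in a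
suitable cyclic order, are the vertices of a positively convex `(n+1)`-gon, and such
that for `2 ≤ i ≤ n` the number `Im( conj (Y i − Y (i-1)) · (Y (i+1) − Y i) )` is nonzero
with sign `ε i`. -/
theorem typeA_realization (n : ℕ) (hn : 2 ≤ n) (ε : ℕ → ℤ)
    (hε : ∀ i, 2 ≤ i → i ≤ n → ε i = 1 ∨ ε i = -1) :
    ∃ Y : ℕ → ℂ,
      (∀ i j : ℕ, 1 ≤ i → i < j → j ≤ n + 1 → cLt (Y i) (Y j)) ∧
      (∃ V : ZMod (n + 1) → ℂ, PosConvex V ∧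
        Set.range V = Y '' {i : ℕ | 1 ≤ i ∧ i ≤ n + 1}) ∧
      (∀ i, 2 ≤ i → i ≤ n →
        0 < (ε i : ℝ) * cross (Y i - Y (i - 1)) (Y (i + 1) - Y i)) :=
  typeA_realization_general n ε hε
end
end

section
/- Geometric form of Proposition 5.4 for E₆: For every sign function ε on the five edges (1,2), (2,4), (3,4), (4,5), (5,6) of the E₆ diagram with values in {+1, −1}, there exists a stable 12-gon of type E6 with the following properties (after cyclic relabeling of indices): V₁, V₂, V₃ are smaller, in the order on ℂ, than all other points of {V_j} ∪ {W_j}; W₁ ≠ W₄, and letting △₊ = {V₀, W₁, W₃} if W₁ < W₄ and △₊ = {W₂, W₄, V₄} if W₄ < W₁, the six points {V₁, V₂, V₃} ∪ △₊ are pairwise distinct and form a positively convex hexagon in a suitable cyclic order; listing these six points increasingly as P₁ < P₂ < ⋯ < P₆ and setting s₁ := P₂ − P₁, s₂ := P₃ − P₂, s₄ := P₄ − P₃, s₅ := P₅ − P₄, s₆ := P₆ − P₅, and s₃ := W₂ − V₀ if V₀ < W₂ and s₃ := V₀ − W₂ otherwise, then for each edge (a,b) among (1,2), (2,4), (3,4),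 (4,5), (5,6), the number Im( conj(s_a) · s_b ) is nonzero with sign ε(a,b). -/
noncomputable section

/-- A 12-gon of type E6: the edge vectors satisfy the two families of linear relations. -/
def IsE6Gon (V : ZMod 12 → ℂ) : Prop :=
  ∀ j : ZMod 12,
    zEdge V j + zEdge V (j + 4) + zEdge V (j + 8) = 0 ∧
    zEdge V j - zEdge V (j - 3) + zEdge V (j - 6) - zEdge V (j - 9) = 0

/-- The inner points `W j` of a 12-gon of type E6. -/
def WE6 (V : ZMod 12 → ℂ) (j : ZMod 12) : ℂ := V j + zEdge V (j + 4)

/-- A stable 12-gon of type E6. -/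
def IsStableE6Gon (V : ZMod 12 → ℂ) : Prop :=
  IsE6Gon V ∧ PosConvex V ∧ ∀ j : ZMod 12, WE6 V j ∈ DiagGon V 3

/-!
For each of the 32 sign patterns we exhibit a 12-gon with Gaussian-integer vertices. For such
polygons the order on `ℂ` and the cross products `Im (conj u * v)` are integers, so convexity,
membership in the diagonal-gon, the position of `V₁, V₂, V₃` and the five signs become decidable
integer conditions, which the kernel checks. The hexagon `P₁ < ⋯ < P₆` is produced by sorting,
and its cyclic order by walking up the chain to the right of `P₁P₆` and back down the chain to
its left; neither construction is proved correct, the check confirms both.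
-/

open GaussianInt

def gcross (u v : GaussianInt) : ℤ := (star u * v).im

theorem cross_coe (u v : GaussianInt) : cross u v = gcross u v := by
  rw [cross, gcross, intCast_im, toComplex_mul, toComplex_star]

theorem mul_cross_coe_pos {e : ℤ} {u v : GaussianInt} (h : 0 < e * gcross u v) :
    0 < (e : ℝ) * cross u v := by
  rw [cross_coe]; exact_mod_cast h

def gLt (a b : GaussianInt) : Prop := a.im < b.im ∨ a.im = b.im ∧ a.re < b.re

instance : DecidableRel gLt := fun _ _ => inferInstanceAs (Decidable (_ ∨ _))

theorem cLt_coe {a b : GaussianInt} : cLt a b ↔ gLt a b := by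
  simp only [cLt, gLt, ← intCast_re, ← intCast_im, Int.cast_lt, Int.cast_inj]

theorem gLt_of_not_gLt {a b : GaussianInt} (h : ¬ gLt a b) (hne : a ≠ b) : gLt b a := by
  have : a.re ≠ b.re ∨ a.im ≠ b.im := by
    contrapose! hne
    exact Zsqrtd.ext hne.1 hne.2
  unfold gLt at *
  omega

theorem range_getD_comp {α β : Type*} {n : ℕ} {l : List α} (hl : l.length = n) (d : α)
    (f : α → β) : Set.range (fun i : Fin n => f (l.getD i d)) = f '' {x | x ∈ l} := by
  subst hl
  rw [← Set.range_list_get, ← Set.range_comp]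
  congr 1
  ext i
  simp

section Polygon

variable {h : ℕ}

def gEdge (V : ZMod h → GaussianInt) (j : ZMod h) : GaussianInt := V j - V (j - 1)

theorem zEdge_coe (V : ZMod h → GaussianInt) (j : ZMod h) :
    zEdge (fun k => (V k : ℂ)) j = gEdge V j :=
  (toComplex_sub _ _).symm

def GPosConvex (V : ZMod h → GaussianInt) : Prop :=
  ∀ j i : ZMod h, i ≠ j - 1 → i ≠ j → 0 < gcross (gEdge V j) (V i - V (j - 1))

instance [NeZero h] (V : ZMod h → GaussianInt) : Decidable (GPosConvex V) := by
  unfold GPosConvex; infer_instance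

theorem posConvex_coe {V : ZMod h → GaussianInt} (hV : GPosConvex V) :
    PosConvex fun j => (V j : ℂ) := by
  intro j i hi hj
  simpa only [gEdge, ← toComplex_sub, cross_coe, Int.cast_pos] using hV j i hi hj

theorem exists_posConvex_of_perm {n : ℕ} {l : List GaussianInt} {P : Fin (n + 1) → GaussianInt}
    (hl : GPosConvex fun i : ZMod (n + 1) => l.getD i.val 0) (hP : l.Perm (List.ofFn P)) :
    ∃ U : ZMod (n + 1) → ℂ, PosConvex U ∧ Set.range U = Set.range fun i => (P i : ℂ) := by
  refine ⟨fun i => (l.getD i.val 0 : ℂ), posConvex_coe hl, ?_⟩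
  have hlen : l.length = n + 1 := by rw [hP.length_eq, List.length_ofFn]
  change Set.range (fun i : Fin (n + 1) => (l.getD i 0 : ℂ)) = _
  rw [range_getD_comp hlen, Set.range_comp']
  ext x
  simp [hP.mem_iff, List.mem_ofFn, Fin.exists_fin_succ]

end Polygon

def ccwCycle (P : Fin 6 → GaussianInt) : List GaussianInt :=
  let mid := [P 1, P 2, P 3, P 4]
  let side := fun q => gcross (P 5 - P 0) (q - P 0)
  P 0 :: mid.filter (side · < 0) ++ P 5 :: (mid.filter (0 < side ·)).reverse

section E6

variable (v : ZMod 12 → GaussianInt)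

def gInner (j : ZMod 12) : GaussianInt := v j + gEdge v (j + 4)

theorem WE6_coe (j : ZMod 12) : WE6 (fun k => (v k : ℂ)) j = gInner v j := by
  rw [WE6, zEdge_coe, gInner, toComplex_add]

def GIsStableE6Gon : Prop :=
  (∀ j : ZMod 12, gEdge v j + gEdge v (j + 4) + gEdge v (j + 8) = 0 ∧
    gEdge v j - gEdge v (j - 3) + gEdge v (j - 6) - gEdge v (j - 9) = 0) ∧
  GPosConvex v ∧ ∀ j k : ZMod 12, 0 < gcross (v (k + 3) - v k) (gInner v j - v k)

instance : Decidable (GIsStableE6Gon v) := by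
  unfold GIsStableE6Gon; infer_instance

variable {v} in
theorem isStableE6Gon_coe (hv : GIsStableE6Gon v) : IsStableE6Gon fun k => (v k : ℂ) := by
  obtain ⟨hrel, hconv, hdiag⟩ := hv
  refine ⟨fun j => ?_, posConvex_coe hconv, fun j k => ?_⟩
  · simp only [zEdge_coe, ← toComplex_add, ← toComplex_sub, toComplex_eq_zero]
    exact hrel j
  · simpa only [WE6_coe, Nat.cast_ofNat, ← toComplex_sub, cross_coe, Int.cast_pos]
      using hdiag j k

def BaseIsLowest : Prop :=
  ∀ t ∈ ([1, 2, 3] : List (ZMod 12)),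
    (∀ k, gLt (v t) (gInner v k)) ∧ ∀ i ∉ ([1, 2, 3] : List (ZMod 12)), gLt (v t) (v i)

instance : Decidable (BaseIsLowest v) := by
  unfold BaseIsLowest; infer_instance

variable {v} in
theorem baseIsLowest_coe (hv : BaseIsLowest v) :
    ∀ t ∈ ({1, 2, 3} : Set (ZMod 12)),
      (∀ k, cLt (v t : ℂ) (WE6 (fun k => (v k : ℂ)) k)) ∧
      ∀ i ∉ ({1, 2, 3} : Set (ZMod 12)), cLt (v t : ℂ) (v i) := by
  simpa only [BaseIsLowest, WE6_coe, cLt_coe, Set.mem_insert_iff, Set.mem_singleton_iff,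
    List.mem_cons, List.not_mem_nil, or_false] using hv

def triangle : List GaussianInt :=
  if gLt (gInner v 1) (gInner v 4) then [v 0, gInner v 1, gInner v 3]
  else [gInner v 2, gInner v 4, v 4]

variable {v} in
theorem triangle_spec (hne : gInner v 1 ≠ gInner v 4) :
    let V := fun k => (v k : ℂ)
    (cLt (WE6 V 1) (WE6 V 4) ∧ (↑) '' {x | x ∈ triangle v} = {V 0, WE6 V 1, WE6 V 3}) ∨
    (cLt (WE6 V 4) (WE6 V 1) ∧ (↑) '' {x | x ∈ triangle v} = {WE6 V 2, WE6 V 4, V 4}) := by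
  simp only [WE6_coe, cLt_coe, triangle]
  split_ifs with hlt
  · exact Or.inl ⟨hlt, by ext; simp [eq_comm]⟩
  · exact Or.inr ⟨gLt_of_not_gLt hlt hne, by ext; simp [eq_comm]⟩

def hexagon (i : Fin 6) : GaussianInt :=
  (([v 1, v 2, v 3] ++ triangle v).insertionSort gLt).getD i 0

theorem range_hexagon :
    Set.range (fun i => (hexagon v i : ℂ)) =
      {(v 1 : ℂ), (v 2 : ℂ), (v 3 : ℂ)} ∪ (↑) '' {x | x ∈ triangle v} := by
  have hlen : (([v 1, v 2, v 3] ++ triangle v).insertionSort gLt).length = 6 := by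
    rw [List.length_insertionSort, List.length_append]
    unfold triangle
    split_ifs <;> rfl
  unfold hexagon
  rw [range_getD_comp hlen]
  ext x
  simp [(List.perm_insertionSort _ _).mem_iff, or_and_right, exists_or, eq_comm, or_assoc]

def s₃ : GaussianInt := if gLt (v 0) (gInner v 2) then gInner v 2 - v 0 else v 0 - gInner v 2

theorem s₃_spec :
    let V := fun k => (v k : ℂ)
    (cLt (V 0) (WE6 V 2) ∧ (s₃ v : ℂ) = WE6 V 2 - V 0) ∨
    (¬ cLt (V 0) (WE6 V 2) ∧ (s₃ v : ℂ) = V 0 - WE6 V 2) := by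
  simp only [WE6_coe, cLt_coe, s₃]
  split_ifs with hlt
  · exact Or.inl ⟨hlt, toComplex_sub _ _⟩
  · exact Or.inr ⟨hlt, toComplex_sub _ _⟩

def HexagonIsConvex : Prop :=
  (∀ i j : Fin 6, i < j → gLt (hexagon v i) (hexagon v j)) ∧
  GPosConvex (fun i : ZMod 6 => (ccwCycle (hexagon v)).getD i.val 0) ∧
  (ccwCycle (hexagon v)).Perm (List.ofFn (hexagon v))

instance : Decidable (HexagonIsConvex v) := by
  unfold HexagonIsConvex; infer_instance

def HasSigns (e12 e24 e34 e45 e56 : ℤ) : Prop :=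
  0 < e12 * gcross (hexagon v 1 - hexagon v 0) (hexagon v 2 - hexagon v 1) ∧
  0 < e24 * gcross (hexagon v 2 - hexagon v 1) (hexagon v 3 - hexagon v 2) ∧
  0 < e34 * gcross (s₃ v) (hexagon v 3 - hexagon v 2) ∧
  0 < e45 * gcross (hexagon v 3 - hexagon v 2) (hexagon v 4 - hexagon v 3) ∧
  0 < e56 * gcross (hexagon v 4 - hexagon v 3) (hexagon v 5 - hexagon v 4)

instance (e12 e24 e34 e45 e56 : ℤ) : Decidable (HasSigns v e12 e24 e34 e45 e56) := by
  unfold HasSigns; infer_instance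

end E6

def boolSign (b : Bool) : ℤ := if b then 1 else -1

theorem exists_boolSign_eq {e : ℤ} (h : e = 1 ∨ e = -1) : ∃ b, boolSign b = e :=
  h.elim (fun h => ⟨true, h.symm⟩) fun h => ⟨false, h.symm⟩

def polygon (l : List GaussianInt) (j : ZMod 12) : GaussianInt := l.getD j.val 0

def realizer : Bool → Bool → Bool → Bool → Bool → ZMod 12 → GaussianInt
  | true, true, true, true, true =>
    polygon [⟨0, 0⟩, ⟨14, -14⟩, ⟨34, -14⟩, ⟨53, -9⟩, ⟨68, -2⟩, ⟨73, 11⟩,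
      ⟨67, 26⟩, ⟨54, 32⟩, ⟨33, 34⟩, ⟨14, 35⟩, ⟨0, 20⟩, ⟨-6, 9⟩]
  | true, true, true, true, false =>
    polygon [⟨0, 0⟩, ⟨9, -12⟩, ⟨32, -11⟩, ⟨46, -8⟩, ⟨56, 2⟩, ⟨60, 17⟩,
      ⟨53, 31⟩, ⟨38, 38⟩, ⟨20, 42⟩, ⟨7, 39⟩, ⟨-9, 24⟩, ⟨-8, 14⟩]
  | true, true, true, false, true =>
    polygon [⟨0, 0⟩, ⟨16, -12⟩, ⟨31, -12⟩, ⟨45, -8⟩, ⟨61, 5⟩, ⟨60, 23⟩,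
      ⟨58, 37⟩, ⟨45, 48⟩, ⟨28, 51⟩, ⟨13, 45⟩, ⟨0, 31⟩, ⟨-1, 16⟩]
  | true, true, true, false, false =>
    polygon [⟨0, 0⟩, ⟨12, -22⟩, ⟨40, -21⟩, ⟨77, -1⟩, ⟨91, 24⟩, ⟨108, 58⟩,
      ⟨107, 89⟩, ⟨82, 104⟩, ⟨59, 102⟩, ⟨30, 90⟩, ⟨3, 58⟩, ⟨-9, 23⟩]
  | true, true, false, true, true =>
    polygon [⟨0, 0⟩, ⟨22, -23⟩, ⟨37, -22⟩, ⟨55, -20⟩, ⟨69, -17⟩, ⟨67, 5⟩,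
      ⟨58, 19⟩, ⟨44, 30⟩, ⟨23, 38⟩, ⟨3, 39⟩, ⟨-3, 24⟩, ⟨-7, 11⟩]
  | true, true, false, true, false =>
    polygon [⟨0, 0⟩, ⟨24, -34⟩, ⟨51, -32⟩, ⟨87, -27⟩, ⟨109, -8⟩, ⟨113, 29⟩,
      ⟨111, 54⟩, ⟨84, 80⟩, ⟨52, 84⟩, ⟨24, 81⟩, ⟨-1, 54⟩, ⟨-10, 23⟩]
  | true, true, false, false, true =>
    polygon [⟨0, 0⟩, ⟨9, -16⟩, ⟨24, -16⟩, ⟨40, -11⟩, ⟨52, -2⟩, ⟨59, 21⟩,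
      ⟨56, 34⟩, ⟨47, 46⟩, ⟨32, 52⟩, ⟨16, 45⟩, ⟨4, 32⟩, ⟨-3, 15⟩]
  | true, true, false, false, false =>
    polygon [⟨0, 0⟩, ⟨14, -34⟩, ⟨40, -29⟩, ⟨66, -22⟩, ⟨86, 7⟩, ⟨92, 48⟩,
      ⟨87, 76⟩, ⟨72, 106⟩, ⟨41, 105⟩, ⟨21, 98⟩, ⟨0, 65⟩, ⟨-11, 28⟩]
  | true, false, true, true, true =>
    polygon [⟨0, 0⟩, ⟨46, -38⟩, ⟨131, -68⟩, ⟨181, -57⟩, ⟨243, -9⟩, ⟨257, 26⟩,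
      ⟨229, 94⟩, ⟨188, 142⟩, ⟨108, 148⟩, ⟨48, 151⟩, ⟨-9, 113⟩, ⟨-18, 54⟩]
  | true, false, true, true, false =>
    polygon [⟨0, 0⟩, ⟨10, -11⟩, ⟨26, -16⟩, ⟨41, -13⟩, ⟨52, -1⟩, ⟨57, 14⟩,
      ⟨53, 30⟩, ⟨42, 42⟩, ⟨27, 47⟩, ⟨12, 43⟩, ⟨0, 32⟩, ⟨-4, 17⟩]
  | true, false, true, false, true =>
    polygon [⟨0, 0⟩, ⟨10, -10⟩, ⟨26, -14⟩, ⟨42, -11⟩, ⟨52, 2⟩, ⟨57, 16⟩,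
      ⟨53, 31⟩, ⟨41, 43⟩, ⟨26, 46⟩, ⟨11, 42⟩, ⟨-1, 31⟩, ⟨-5, 16⟩]
  | true, false, true, false, false =>
    polygon [⟨0, 0⟩, ⟨19, -8⟩, ⟨34, -14⟩, ⟨51, -12⟩, ⟨61, 7⟩, ⟨60, 18⟩,
      ⟨53, 36⟩, ⟨36, 51⟩, ⟨20, 51⟩, ⟨2, 48⟩, ⟨-6, 36⟩, ⟨-6, 19⟩]
  | true, false, false, true, true =>
    polygon [⟨0, 0⟩, ⟨6, -15⟩, ⟨28, -20⟩, ⟨40, -19⟩, ⟨51, -12⟩, ⟨58, 2⟩,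
      ⟨53, 19⟩, ⟨41, 29⟩, ⟨26, 37⟩, ⟨13, 38⟩, ⟨-4, 26⟩, ⟨-4, 15⟩]
  | true, false, false, true, false =>
    polygon [⟨0, 0⟩, ⟨22, -23⟩, ⟨54, -33⟩, ⟨83, -25⟩, ⟨107, -2⟩, ⟨117, 28⟩,
      ⟨108, 60⟩, ⟨87, 84⟩, ⟨57, 92⟩, ⟨25, 85⟩, ⟨2, 63⟩, ⟨-6, 31⟩]
  | true, false, false, false, true =>
    polygon [⟨0, 0⟩, ⟨39, -49⟩, ⟨96, -61⟩, ⟨163, -51⟩, ⟨198, -5⟩, ⟨215, 62⟩,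
      ⟨201, 118⟩, ⟨154, 169⟩, ⟨94, 187⟩, ⟨38, 169⟩, ⟨-5, 125⟩, ⟨-25, 64⟩]
  | true, false, false, false, false =>
    polygon [⟨0, 0⟩, ⟨19, -14⟩, ⟨42, -27⟩, ⟨74, -15⟩, ⟨104, 11⟩, ⟨116, 36⟩,
      ⟨118, 62⟩, ⟨104, 89⟩, ⟨75, 88⟩, ⟨44, 77⟩, ⟨19, 64⟩, ⟨1, 25⟩]
  | false, true, true, true, true =>
    polygon [⟨0, 0⟩, ⟨62, -50⟩, ⟨127, -60⟩, ⟨178, -45⟩, ⟨233, 8⟩, ⟨245, 57⟩,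
      ⟨213, 129⟩, ⟨173, 170⟩, ⟨109, 173⟩, ⟨35, 174⟩, ⟨2, 112⟩, ⟨-9, 56⟩]
  | false, true, true, true, false =>
    polygon [⟨0, 0⟩, ⟨10, -11⟩, ⟨28, -17⟩, ⟨45, -10⟩, ⟨54, 0⟩, ⟨62, 13⟩,
      ⟨57, 31⟩, ⟨43, 40⟩, ⟨30, 43⟩, ⟨12, 41⟩, ⟨-1, 29⟩, ⟨-4, 13⟩]
  | false, true, true, false, true =>
    polygon [⟨0, 0⟩, ⟨11, -12⟩, ⟨26, -15⟩, ⟨43, -12⟩, ⟨53, 0⟩, ⟨57, 16⟩,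
      ⟨53, 31⟩, ⟨41, 43⟩, ⟨25, 47⟩, ⟨10, 43⟩, ⟨-1, 31⟩, ⟨-6, 16⟩]
  | false, true, true, false, false =>
    polygon [⟨0, 0⟩, ⟨14, -9⟩, ⟨28, -10⟩, ⟨44, -6⟩, ⟨56, 3⟩, ⟨57, 14⟩,
      ⟨54, 25⟩, ⟨41, 33⟩, ⟨25, 33⟩, ⟨10, 31⟩, ⟨-1, 21⟩, ⟨-4, 9⟩]
  | false, true, false, true, true =>
    polygon [⟨0, 0⟩, ⟨10, -18⟩, ⟨28, -19⟩, ⟨45, -16⟩, ⟨61, -12⟩, ⟨66, 5⟩,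
      ⟨64, 19⟩, ⟨54, 28⟩, ⟨34, 34⟩, ⟨19, 35⟩, ⟨3, 22⟩, ⟨-4, 10⟩]
  | false, true, false, true, false =>
    polygon [⟨0, 0⟩, ⟨16, -13⟩, ⟨30, -16⟩, ⟨44, -11⟩, ⟨60, -2⟩, ⟨61, 14⟩,
      ⟨57, 29⟩, ⟨47, 39⟩, ⟨30, 43⟩, ⟨13, 40⟩, ⟨3, 28⟩, ⟨-1, 13⟩]
  | false, true, false, false, true =>
    polygon [⟨0, 0⟩, ⟨9, -11⟩, ⟨23, -15⟩, ⟨38, -8⟩, ⟨48, 1⟩, ⟨53, 17⟩,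
      ⟨50, 31⟩, ⟨40, 41⟩, ⟨26, 44⟩, ⟨12, 39⟩, ⟨1, 29⟩, ⟨-4, 12⟩]
  | false, true, false, false, false =>
    polygon [⟨0, 0⟩, ⟨15, -10⟩, ⟨28, -14⟩, ⟨43, -10⟩, ⟨55, 3⟩, ⟨54, 16⟩,
      ⟨51, 29⟩, ⟨38, 43⟩, ⟨22, 42⟩, ⟨8, 39⟩, ⟨-2, 30⟩, ⟨-4, 12⟩]
  | false, false, true, true, true =>
    polygon [⟨0, 0⟩, ⟨12, -10⟩, ⟨25, -13⟩, ⟨37, -14⟩, ⟨54, 1⟩, ⟨61, 10⟩,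
      ⟨60, 27⟩, ⟨53, 38⟩, ⟨42, 40⟩, ⟨23, 41⟩, ⟨11, 27⟩, ⟨6, 17⟩]
  | false, false, true, true, false =>
    polygon [⟨0, 0⟩, ⟨18, -22⟩, ⟨51, -29⟩, ⟨82, -30⟩, ⟨106, -4⟩, ⟨123, 29⟩,
      ⟨116, 60⟩, ⟨96, 84⟩, ⟨69, 101⟩, ⟨34, 90⟩, ⟨8, 66⟩, ⟨-3, 43⟩]
  | false, false, true, false, true =>
    polygon [⟨0, 0⟩, ⟨16, -8⟩, ⟨30, -11⟩, ⟨47, -12⟩, ⟨59, 3⟩, ⟨60, 17⟩,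
      ⟨56, 29⟩, ⟨42, 43⟩, ⟨26, 47⟩, ⟨9, 41⟩, ⟨-1, 32⟩, ⟨-4, 19⟩]
  | false, false, true, false, false =>
    polygon [⟨0, 0⟩, ⟨26, -8⟩, ⟨55, -11⟩, ⟨100, -13⟩, ⟨129, 28⟩, ⟨137, 48⟩,
      ⟨139, 73⟩, ⟨111, 100⟩, ⟨73, 98⟩, ⟨39, 86⟩, ⟨8, 64⟩, ⟨-9, 39⟩]
  | false, false, false, true, true =>
    polygon [⟨0, 0⟩, ⟨10, -9⟩, ⟨21, -15⟩, ⟨38, -16⟩, ⟨46, -7⟩, ⟨49, 1⟩,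
      ⟨48, 14⟩, ⟨36, 25⟩, ⟨23, 29⟩, ⟨10, 30⟩, ⟨0, 23⟩, ⟨-5, 13⟩]
  | false, false, false, true, false =>
    polygon [⟨0, 0⟩, ⟨15, -26⟩, ⟨58, -33⟩, ⟨87, -34⟩, ⟨106, -7⟩, ⟨123, 26⟩,
      ⟨109, 58⟩, ⟨84, 86⟩, ⟨54, 99⟩, ⟨22, 92⟩, ⟨-7, 67⟩, ⟨-11, 40⟩]
  | false, false, false, false, true =>
    polygon [⟨0, 0⟩, ⟨8, -8⟩, ⟨18, -13⟩, ⟨31, -14⟩, ⟨41, 0⟩, ⟨47, 13⟩,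
      ⟨46, 25⟩, ⟨39, 40⟩, ⟨29, 44⟩, ⟨15, 39⟩, ⟨6, 32⟩, ⟨0, 18⟩]
  | false, false, false, false, false =>
    polygon [⟨0, 0⟩, ⟨9, -10⟩, ⟨23, -13⟩, ⟨44, -14⟩, ⟨55, 2⟩, ⟨59, 14⟩,
      ⟨59, 26⟩, ⟨47, 43⟩, ⟨28, 42⟩, ⟨15, 40⟩, ⟨1, 31⟩, ⟨-8, 15⟩]

def Certificate (v : ZMod 12 → GaussianInt) (e12 e24 e34 e45 e56 : ℤ) : Prop :=
  GIsStableE6Gon v ∧ BaseIsLowest v ∧ gInner v 1 ≠ gInner v 4 ∧ HexagonIsConvex v ∧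
    HasSigns v e12 e24 e34 e45 e56

instance (v : ZMod 12 → GaussianInt) (e12 e24 e34 e45 e56 : ℤ) :
    Decidable (Certificate v e12 e24 e34 e45 e56) := by
  unfold Certificate; infer_instance

theorem certificate_realizer :
    ∀ b₁ b₂ b₃ b₄ b₅ : Bool, Certificate (realizer b₁ b₂ b₃ b₄ b₅)
      (boolSign b₁) (boolSign b₂) (boolSign b₃) (boolSign b₄) (boolSign b₅) := by
  decide +kernel

/-- Geometric form of Proposition 5.4 for `E₆`: every sign function on the five edges
`(1,2), (2,4), (3,4), (4,5), (5,6)` of the `E₆` diagram is realized by a stable 12-gon of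
type `E6` (after cyclic relabeling). -/
theorem typeE6_realization (e12 e24 e34 e45 e56 : ℤ)
    (h12 : e12 = 1 ∨ e12 = -1) (h24 : e24 = 1 ∨ e24 = -1) (h34 : e34 = 1 ∨ e34 = -1)
    (h45 : e45 = 1 ∨ e45 = -1) (h56 : e56 = 1 ∨ e56 = -1) :
    ∃ V : ZMod 12 → ℂ, IsStableE6Gon V ∧
      (∀ t : ZMod 12, t ∈ ({1, 2, 3} : Set (ZMod 12)) →
        (∀ k : ZMod 12, cLt (V t) (WE6 V k)) ∧
        (∀ i : ZMod 12, i ∉ ({1, 2, 3} : Set (ZMod 12)) → cLt (V t) (V i))) ∧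
      WE6 V 1 ≠ WE6 V 4 ∧
      ∃ T : Set ℂ,
        ((cLt (WE6 V 1) (WE6 V 4) ∧ T = {V 0, WE6 V 1, WE6 V 3}) ∨
         (cLt (WE6 V 4) (WE6 V 1) ∧ T = {WE6 V 2, WE6 V 4, V 4})) ∧
        ∃ P : Fin 6 → ℂ,
          (∀ i j : Fin 6, i < j → cLt (P i) (P j)) ∧
          Set.range P = ({V 1, V 2, V 3} : Set ℂ) ∪ T ∧
          (∃ U : ZMod 6 → ℂ, PosConvex U ∧ Set.range U = Set.range P) ∧
          ∃ s3 : ℂ,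
            ((cLt (V 0) (WE6 V 2) ∧ s3 = WE6 V 2 - V 0) ∨
             (¬ cLt (V 0) (WE6 V 2) ∧ s3 = V 0 - WE6 V 2)) ∧
            0 < (e12 : ℝ) * cross (P 1 - P 0) (P 2 - P 1) ∧
            0 < (e24 : ℝ) * cross (P 2 - P 1) (P 3 - P 2) ∧
            0 < (e34 : ℝ) * cross s3 (P 3 - P 2) ∧
            0 < (e45 : ℝ) * cross (P 3 - P 2) (P 4 - P 3) ∧
            0 < (e56 : ℝ) * cross (P 4 - P 3) (P 5 - P 4) := by
  obtain ⟨b₁, rfl⟩ := exists_boolSign_eq h12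
  obtain ⟨b₂, rfl⟩ := exists_boolSign_eq h24
  obtain ⟨b₃, rfl⟩ := exists_boolSign_eq h34
  obtain ⟨b₄, rfl⟩ := exists_boolSign_eq h45
  obtain ⟨b₅, rfl⟩ := exists_boolSign_eq h56
  obtain ⟨hstable, hlow, hne, ⟨hsorted, hcycle, hperm⟩, s12, s24, s34, s45, s56⟩ :=
    certificate_realizer b₁ b₂ b₃ b₄ b₅
  set v := realizer b₁ b₂ b₃ b₄ b₅
  refine ⟨fun k => (v k : ℂ), isStableE6Gon_coe hstable, baseIsLowest_coe hlow,
    by simpa only [WE6_coe, ne_eq, toComplex_inj] using hne, _, triangle_spec hne,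
    fun i => (hexagon v i : ℂ), fun i j hij => cLt_coe.2 (hsorted i j hij), range_hexagon v,
    exists_posConvex_of_perm hcycle hperm, s₃ v, s₃_spec v, ?_, ?_, ?_, ?_, ?_⟩
  · simpa only [toComplex_sub] using mul_cross_coe_pos s12
  · simpa only [toComplex_sub] using mul_cross_coe_pos s24
  · simpa only [toComplex_sub] using mul_cross_coe_pos s34
  · simpa only [toComplex_sub] using mul_cross_coe_pos s45
  · simpa only [toComplex_sub] using mul_cross_coe_pos s56
end
end

section
/- Lemma 4.5: Let n ≥ 4 and let (V₁, …, V_{2(n−1)}; B₊, B₋) be a stable 2(n−1)-gon of type D_n with B₋ ≤ B₊. List the 2n points {V_j} ∪ {B₊, B₋} in increasing order as Y_{−n} ≤ ⋯ ≤ Y_{−1} ≤ Y₁ ≤ ⋯ ≤ Y_n. Then: (i) the n points Y_{−n}, …, Y_{−1} form, in a suitable cyclic order, a positively convex n-gon (the polygon ∇_n^−); and (ii) the n points obtained from {Y_{−n}, …, Y_{−1}} by replacing B₋ with B₊ also form, in a suitable cyclic order, a positively convex n-gon (the polygon ∇_n^+). -/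
noncomputable section

/-- Central symmetry about `0` for a `2(n-1)`-gon. -/
def DSym (n : ℕ) (V : ZMod (2 * (n - 1)) → ℂ) : Prop :=
  ∀ j : ZMod (2 * (n - 1)), V (j + ((n - 1 : ℕ) : ZMod (2 * (n - 1)))) = -V j

/-- A stable `2(n-1)`-gon of type `D_n`, with punctures `B₊ = B` and `B₋ = -B`. -/
def IsStableDGon (n : ℕ) (V : ZMod (2 * (n - 1)) → ℂ) (B : ℂ) : Prop :=
  PosConvex V ∧ DSym n V ∧ cLe (-B) B ∧
    (-B) ∈ DiagGon V (n - 2) ∧ B ∈ DiagGon V (n - 2)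

/-- The `2n` marked points of a type `D_n` gon: the vertices together with the two punctures. -/
def DPoints (n : ℕ) (V : ZMod (2 * (n - 1)) → ℂ) (B : ℂ) :
    ZMod (2 * (n - 1)) ⊕ Fin 2 → ℂ :=
  Sum.elim V (fun b => if b = 0 then B else -B)

/-- `Y 0, Y 1, …, Y (2n-1)` is an increasing enumeration (via the bijection `e`) of the
`2n` marked points; `Y i` corresponds to the point `Y_{i-n}` (for `0 ≤ i ≤ n-1`) resp.
`Y_{i-n+1}` (for `n ≤ i ≤ 2n-1`) of the paper. -/
def DEnum (n : ℕ) (V : ZMod (2 * (n - 1)) → ℂ) (B : ℂ) (Y : ℕ → ℂ)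
    (e : Fin (2 * n) ≃ (ZMod (2 * (n - 1)) ⊕ Fin 2)) : Prop :=
  (∀ m : Fin (2 * n), Y (m : ℕ) = DPoints n V B (e m)) ∧
  (∀ i j : ℕ, i < j → j < 2 * n → cLe (Y i) (Y j))

/-!
Compare points of the plane lexicographically by `(Im, Re)`. The four
triangles of a convex quadrilateral `a b c d` give a dependence `α a + γ c = β b + δ d` with
positive coefficients, so its vertices cannot alternate in sign; hence the vertices of the
centrally symmetric gon below `0` form an arc `V k, …, V (k + n - 2)`. Because `-B ≤ 0 ≤ B`,
the `n` smallest marked points are this arc and `B₋ = -B`. Three vertices of the arc in order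
are positively oriented by convexity, and a puncture `P` of the level-`(n - 2)` diagonal-gon
lies to the left of every chord `V a → V (a + m)` with `m ≤ n - 2`, because it lies to the left
of the two level-`(n - 2)` diagonals that cross that chord. So the arc followed by `B₋`, or by
`B₊`, is a positively convex `n`-gon.
-/

lemma cross_def (u v : ℂ) : cross u v = u.re * v.im - u.im * v.re := by
  simp only [cross, Complex.mul_im, Complex.conj_re, Complex.conj_im]; ring

lemma cross_mul_cross (u x y z : ℂ) :
    cross x y * cross u z = cross x z * cross u y + cross z y * cross u x := by
  simp only [cross_def]; ring

def Ccw (a b c : ℂ) : Prop := 0 < cross (b - a) (c - a)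

lemma Ccw.rotate {a b c : ℂ} (h : Ccw a b c) : Ccw b c a := by
  unfold Ccw at *; convert h using 1; simp only [cross_def, Complex.sub_re, Complex.sub_im]; ring

lemma not_ccw_self_right (a b : ℂ) : ¬ Ccw a b a := by
  simp [Ccw, cross_def]

/-- Directions in the open half-plane to the left of `u` are totally ordered by angle. -/
lemma cross_pos_trans {u x y z : ℂ} (hx : 0 < cross u x) (hy : 0 < cross u y)
    (hz : 0 < cross u z) (hxy : 0 < cross x y) (hyz : 0 < cross y z) : 0 < cross x z := by
  have h : 0 < cross x z * cross u y := by
    rw [cross_mul_cross u x z y]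
    positivity
  exact (pos_iff_pos_of_mul_pos h).2 hy

/-- `a b q₁ q₂` is a convex quadrilateral with diagonals `a → q₁` and `q₂ → b`. -/
lemma Ccw.of_left_of_diagonals {a b q₁ q₂ P : ℂ} (h₁ : Ccw a b q₁) (h₂ : Ccw a b q₂)
    (hq : Ccw q₂ b q₁) (hP₁ : Ccw a q₁ P) (hP₂ : Ccw q₂ b P) : Ccw a b P := by
  unfold Ccw at *
  have hD₁ : cross (q₁ - a) (b - q₂) < 0 := by
    have : cross (q₁ - a) (b - q₂) = -(cross (b - q₂) (q₁ - q₂) + cross (b - a) (q₂ - a)) := by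
      simp only [cross_def, Complex.sub_re, Complex.sub_im]; ring
    linarith
  have hDP : cross (P - a) (b - q₂) < 0 := by
    have : cross (P - a) (b - q₂) = -(cross (b - q₂) (P - q₂) + cross (b - a) (q₂ - a)) := by
      simp only [cross_def, Complex.sub_re, Complex.sub_im]; ring
    linarith
  have hBD : cross (b - a) (b - q₂) < 0 := by
    have : cross (b - a) (b - q₂) = -cross (b - a) (q₂ - a) := by
      simp only [cross_def, Complex.sub_re, Complex.sub_im]; ring
    linarith
  have key := cross_mul_cross (b - a) (q₁ - a) (b - q₂) (P - a)
  nlinarith [mul_pos hP₁ (neg_pos.2 hBD), mul_pos (neg_pos.2 hDP) h₁]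

def lexKey (z : ℂ) : ℝ ×ₗ ℝ := toLex (z.im, z.re)

lemma lexKey_injective : Function.Injective lexKey := fun z w h => by
  simp only [lexKey, toLex_inj, Prod.mk.injEq] at h
  exact Complex.ext h.2 h.1

lemma cLt_iff_lexKey_lt {z w : ℂ} : cLt z w ↔ lexKey z < lexKey w := by
  rw [lexKey, lexKey, Prod.Lex.toLex_lt_toLex, cLt]

lemma cLe_iff_lexKey_le {z w : ℂ} : cLe z w ↔ lexKey z ≤ lexKey w := by
  rw [cLe, cLt_iff_lexKey_lt, le_iff_lt_or_eq, lexKey_injective.eq_iff]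

lemma lexKey_zero : lexKey 0 = 0 := rfl

lemma lexKey_neg (z : ℂ) : lexKey (-z) = -lexKey z := rfl

lemma lexKey_add (z w : ℂ) : lexKey (z + w) = lexKey z + lexKey w := rfl

lemma lexKey_ofReal_mul_nonneg {c : ℝ} (hc : 0 < c) {z : ℂ} (hz : 0 ≤ lexKey z) :
    0 ≤ lexKey (c * z) := by
  rw [← lexKey_zero, lexKey, lexKey, Prod.Lex.toLex_le_toLex] at *
  simp only [Complex.zero_im, Complex.zero_re, Complex.re_ofReal_mul, Complex.im_ofReal_mul] at *
  rcases hz with hz | ⟨hz, hz'⟩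
  · exact Or.inl (mul_pos hc hz)
  · exact Or.inr ⟨by rw [← hz, mul_zero], mul_nonneg hc.le hz'⟩

lemma lexKey_ofReal_mul_neg {c : ℝ} (hc : 0 < c) {z : ℂ} (hz : lexKey z < 0) :
    lexKey (c * z) < 0 := by
  rw [← lexKey_zero, lexKey, lexKey, Prod.Lex.toLex_lt_toLex] at *
  simp only [Complex.zero_im, Complex.zero_re, Complex.re_ofReal_mul, Complex.im_ofReal_mul] at *
  rcases hz with hz | ⟨hz, hz'⟩
  · exact Or.inl (mul_neg_of_pos_of_neg hc hz)
  · exact Or.inr ⟨by rw [hz, mul_zero], mul_neg_of_pos_of_neg hc hz'⟩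

lemma not_ccw_quadrilateral_of_alternating {a b c d : ℂ} (habc : Ccw a b c) (habd : Ccw a b d)
    (hacd : Ccw a c d) (hbcd : Ccw b c d) (ha : 0 ≤ lexKey a) (hb : lexKey b < 0)
    (hc : 0 ≤ lexKey c) (hd : lexKey d < 0) : False := by
  unfold Ccw at *
  -- the affine dependence of four points in the plane, with positive coefficients here
  have hdep : (cross (c - b) (d - b) : ℂ) * a + (cross (b - a) (d - a) : ℂ) * c
      = (cross (c - a) (d - a) : ℂ) * b + (cross (b - a) (c - a) : ℂ) * d := by
    apply Complex.ext <;>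
      simp only [cross_def, Complex.add_re, Complex.add_im, Complex.re_ofReal_mul,
        Complex.im_ofReal_mul, Complex.sub_re, Complex.sub_im] <;> ring
  have hL := add_nonneg (lexKey_ofReal_mul_nonneg hbcd ha) (lexKey_ofReal_mul_nonneg habd hc)
  have hR := add_neg (lexKey_ofReal_mul_neg hacd hb) (lexKey_ofReal_mul_neg habc hd)
  rw [← lexKey_add, hdep, lexKey_add] at hL
  exact hL.not_gt hR

lemma ZMod.natCast_eq_natCast_iff_of_lt {N p q : ℕ} (hp : p < N) (hq : q < N) :
    (p : ZMod N) = q ↔ p = q := by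
  rw [ZMod.natCast_eq_natCast_iff', Nat.mod_eq_of_lt hp, Nat.mod_eq_of_lt hq]

lemma ZMod.add_natCast_ne_add_natCast {N p q : ℕ} (a : ZMod N) (hp : p < N) (hq : q < N)
    (hpq : p ≠ q) : a + p ≠ a + q := by
  rwa [Ne, add_right_inj, ZMod.natCast_eq_natCast_iff_of_lt hp hq]

lemma ZMod.exists_not_and_add_one {N : ℕ} [NeZero N] {p : ZMod N → Prop} {a b : ZMod N}
    (ha : p a) (hb : ¬ p b) : ∃ k, ¬ p k ∧ p (k + 1) := by
  by_contra! h
  have hstep (m : ℕ) : ¬ p (b + m) := by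
    induction m with
    | zero => simpa using hb
    | succ m ih => simpa [add_assoc] using h _ ih
  exact hstep (a - b).val (by rwa [ZMod.natCast_zmod_val, add_sub_cancel])

section PosConvex

variable {N : ℕ} {V : ZMod N → ℂ}

lemma PosConvex.ccw_one {a : ZMod N} {q : ℕ} (hV : PosConvex V) (hq : 2 ≤ q) (hqN : q < N) :
    Ccw (V a) (V (a + 1)) (V (a + q)) := by
  have h := hV (a + 1) (a + q) (by
      simpa using ZMod.add_natCast_ne_add_natCast a hqN (by omega : 0 < N) (by omega))
    (by simpa using ZMod.add_natCast_ne_add_natCast a hqN (by omega : 1 < N) (by omega))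
  unfold Ccw; simpa using h

lemma PosConvex.ccw_succ {a : ZMod N} {p : ℕ} (hV : PosConvex V) (hp : 1 ≤ p) (hpN : p + 1 < N) :
    Ccw (V a) (V (a + p)) (V (a + (p + 1 : ℕ))) := by
  have hsub : a + ((p + 1 : ℕ) : ZMod N) - 1 = a + p := by push_cast; ring
  have h : Ccw _ _ _ := hV (a + (p + 1 : ℕ)) a
    (by rw [hsub]; simpa using (ZMod.add_natCast_ne_add_natCast a (by omega : p < N)
      (by omega : 0 < N) (by omega)).symm)
    (by simpa using (ZMod.add_natCast_ne_add_natCast a hpN (by omega : 0 < N) (by omega)).symm)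
  rw [hsub] at h
  exact h.rotate.rotate

lemma PosConvex.ccw_of_lt (hV : PosConvex V) (a : ZMod N) {p q : ℕ} (hp : 0 < p) (hpq : p < q)
    (hq : q < N) : Ccw (V a) (V (a + p)) (V (a + q)) := by
  induction q, hpq using Nat.le_induction with
  | base => exact hV.ccw_succ hp hq
  | succ q hpq ih =>
    rcases Nat.lt_or_ge 1 p with hp1 | hp1
    · -- all directions from `V a` lie to the left of the edge `V a → V (a + 1)`
      exact cross_pos_trans (hV.ccw_one hp1 (by omega)) (hV.ccw_one (by omega) (by omega))
        (hV.ccw_one (by omega) hq) (ih (by omega)) (hV.ccw_succ (by omega) hq)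
    · obtain rfl : p = 1 := by omega
      simpa using hV.ccw_one (a := a) (by omega) hq

lemma PosConvex.ccw_of_lt_of_lt (hV : PosConvex V) (a : ZMod N) {p q r : ℕ} (hpq : p < q)
    (hqr : q < r) (hr : r < N) : Ccw (V (a + p)) (V (a + q)) (V (a + r)) := by
  have h := hV.ccw_of_lt (a + p) (p := q - p) (q := r - p) (by omega) (by omega) (by omega)
  rwa [add_assoc, add_assoc, ← Nat.cast_add, ← Nat.cast_add, Nat.add_sub_cancel' hpq.le,
    Nat.add_sub_cancel' (hpq.trans hqr).le] at h

lemma PosConvex.ccw_of_mem_diagGon (hV : PosConvex V) {s : ℕ} (hs : 2 * s ≤ N) {P : ℂ}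
    (hP : P ∈ DiagGon V s) (a : ZMod N) {m : ℕ} (hm : 0 < m) (hms : m ≤ s) :
    Ccw (V a) (V (a + m)) P := by
  rcases hms.eq_or_lt with rfl | hms
  · exact hP a
  -- `P` lies to the left of the level-`s` diagonals starting at `V a` and ending at `V (a + m)`
  set c : ZMod N := a + (N + m - s : ℕ)
  have hc : c + s = a + m := by
    rw [add_assoc, ← Nat.cast_add, Nat.sub_add_cancel (by omega), Nat.cast_add,
      ZMod.natCast_self, zero_add]
  have hP₂ : Ccw (V c) (V (a + m)) P := hc ▸ hP c
  exact Ccw.of_left_of_diagonals (hV.ccw_of_lt a hm hms (by omega))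
    (hV.ccw_of_lt a hm (by omega) (by omega))
    (hV.ccw_of_lt_of_lt a hms (by omega) (by omega)).rotate.rotate (hP a) hP₂

lemma PosConvex.lexKey_neg_of_between (hV : PosConvex V) {a : ZMod N} {q : ℕ} (hqN : q < N)
    (ha : 0 ≤ lexKey (V a)) (h₁ : lexKey (V (a + 1)) < 0) (hq : lexKey (V (a + q)) < 0)
    {i : ℕ} (hi : 1 ≤ i) (hiq : i ≤ q) : lexKey (V (a + i)) < 0 := by
  rcases hi.eq_or_lt with rfl | hi
  · simpa using h₁
  rcases hiq.eq_or_lt with rfl | hiq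
  · exact hq
  by_contra! h
  exact not_ccw_quadrilateral_of_alternating
    (by simpa using hV.ccw_of_lt a one_pos hi (by omega))
    (by simpa using hV.ccw_of_lt a one_pos (by omega) hqN)
    (hV.ccw_of_lt a (by omega) hiq hqN)
    (by simpa using hV.ccw_of_lt_of_lt a hi hiq hqN) ha h₁ h hq

end PosConvex

lemma posConvex_of_ccw {n : ℕ} [NeZero n] (W : ℕ → ℂ)
    (hW : ∀ a b c, a < b → b < c → c < n → Ccw (W a) (W b) (W c)) :
    PosConvex (fun x : ZMod n => W x.val) := by
  intro j i hij hii
  obtain rfl | hn : n = 1 ∨ 1 < n := by have := NeZero.ne n; omega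
  · exact absurd (Subsingleton.elim i j) hii
  have : Fact (1 < n) := ⟨hn⟩
  set u := (j - 1).val
  have hj : j.val = (u + 1) % n := by rw [← ZMod.val_one n, ← ZMod.val_add, sub_add_cancel]
  have hiu : i.val ≠ u := fun h => hij (ZMod.val_injective n h)
  have hij' : i.val ≠ j.val := fun h => hii (ZMod.val_injective n h)
  have hu : u < n := ZMod.val_lt _
  have hi : i.val < n := ZMod.val_lt _
  show Ccw (W u) (W j.val) (W i.val)
  rcases (show u + 1 < n ∨ u + 1 = n by omega) with hu1 | hu1
  · rw [hj, Nat.mod_eq_of_lt hu1] at hij' ⊢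
    rcases (show i.val < u ∨ u + 1 < i.val by omega) with h | h
    · exact (hW _ _ _ h (by omega) hu1).rotate
    · exact hW _ _ _ (by omega) h hi
  · rw [hj, hu1, Nat.mod_self] at hij' ⊢
    exact (hW _ _ _ (by omega) (by omega) hu).rotate.rotate

section DGon

variable {n : ℕ} {V : ZMod (2 * (n - 1)) → ℂ}

lemma DSym.apply_ne_zero (hsym : DSym n V) (hn : 4 ≤ n) (hV : PosConvex V)
    (j : ZMod (2 * (n - 1))) : V j ≠ 0 := by
  intro h
  have := hV.ccw_of_lt j (p := 1) (q := n - 1) one_pos (by omega) (by omega)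
  rw [hsym j, h, neg_zero] at this
  exact not_ccw_self_right _ _ this

lemma DSym.exists_arc_lexKey_neg (hsym : DSym n V) (hn : 4 ≤ n) (hV : PosConvex V) :
    ∃ k, ∀ i < 2 * (n - 1), lexKey (V (k + i)) < 0 ↔ i < n - 1 := by
  have : NeZero (2 * (n - 1)) := ⟨by omega⟩
  have hflip (j) : lexKey (V (j + (n - 1 : ℕ))) < 0 ↔ ¬ lexKey (V j) < 0 := by
    have hne : lexKey (V j) ≠ 0 := fun h =>
      hsym.apply_ne_zero hn hV j (lexKey_injective (h.trans lexKey_zero.symm))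
    rw [hsym j, lexKey_neg, neg_lt_zero]
    exact ⟨fun h => h.not_gt, fun h => (lt_or_gt_of_ne hne).resolve_left h⟩
  obtain ⟨k, hk, hk₁⟩ : ∃ k, ¬ lexKey (V k) < 0 ∧ lexKey (V (k + 1)) < 0 := by
    by_cases h : lexKey (V 0) < 0
    · exact ZMod.exists_not_and_add_one h (by rwa [hflip, not_not])
    · exact ZMod.exists_not_and_add_one ((hflip 0).2 h) h
  have harc (i : ℕ) (hi : i < n - 1) : lexKey (V (k + 1 + i)) < 0 := by
    have := hV.lexKey_neg_of_between (q := n - 1) (i := i + 1) (by omega) (not_lt.1 hk) hk₁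
      ((hflip k).2 hk) (by omega) (by omega)
    rwa [Nat.cast_add, Nat.cast_one, add_comm (i : ZMod (2 * (n - 1))), ← add_assoc] at this
  refine ⟨k + 1, fun i hi => ⟨fun h => ?_, harc i⟩⟩
  by_contra! hi'
  have hsplit : k + 1 + (i : ZMod (2 * (n - 1)))
      = k + 1 + ((i - (n - 1) : ℕ) : ZMod (2 * (n - 1))) + ((n - 1 : ℕ) : ZMod (2 * (n - 1))) := by
    rw [add_assoc (k + 1), ← Nat.cast_add, Nat.sub_add_cancel hi']
  rw [hsplit, hflip] at h
  exact h (harc _ (by omega))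

end DGon

lemma Finset.exists_mem_notMem_of_card_le_card {α : Type*} {s t : Finset α}
    (h : s.card ≤ t.card) {a : α} (has : a ∈ s) (hat : a ∉ t) : ∃ b ∈ t, b ∉ s := by
  by_contra! hts
  exact hat (Finset.eq_of_subset_of_card_le hts h ▸ has)

lemma image_lt_card_eq_image_of_sorted {α β : Type*} [LinearOrder β] {m : ℕ} (e : Fin m ≃ α)
    {f : α → β} {Y : ℕ → β} (hY : ∀ i : Fin m, Y i = f (e i))
    (hmono : ∀ i j, i < j → j < m → Y i ≤ Y j) {S : Finset α}
    (hsep : ∀ s ∈ S, ∀ t ∉ S, f s ≤ f t) : Y '' {i | i < S.card} = f '' S := by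
  classical
  set T : Finset ℕ := S.image fun s => (e.symm s : ℕ)
  have hT : T.card = (Finset.range S.card).card := by
    rw [Finset.card_range]
    exact Finset.card_image_of_injective _ (Fin.val_injective.comp e.symm.injective)
  have hmemT (i : Fin m) : (i : ℕ) ∈ T ↔ e i ∈ S := by
    simp only [T, Finset.mem_image, Fin.val_inj, Equiv.symm_apply_eq]
    exact ⟨fun ⟨_, hs, h⟩ => h ▸ hs, fun h => ⟨_, h, rfl⟩⟩
  have hSm : S.card ≤ m := by
    simpa using Finset.card_le_card_of_injOn e.symm (fun _ _ => Finset.mem_univ _)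
      e.symm.injective.injOn
  -- by counting, a position below `#S` holding a label off `S` is matched with a position
  -- above it holding a label in `S`; sortedness and `hsep` force equal values there
  have hswap (i p : Fin m) (hip : (i : ℕ) < p) (hi : e i ∉ S) (hp : e p ∈ S) : Y i = Y p :=
    le_antisymm (hmono _ _ hip p.2) (by rw [hY, hY]; exact hsep _ hp _ hi)
  ext y
  constructor
  · rintro ⟨i, hi, rfl⟩
    have him : i < m := hi.trans_le hSm
    by_cases hiS : e ⟨i, him⟩ ∈ S
    · exact ⟨_, hiS, (hY ⟨i, him⟩).symm⟩
    obtain ⟨p, hpT, hp⟩ := Finset.exists_mem_notMem_of_card_le_card hT.ge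
      (Finset.mem_range.2 hi) fun h => hiS ((hmemT ⟨i, him⟩).1 h)
    obtain ⟨s, hs, rfl⟩ := Finset.mem_image.1 hpT
    refine ⟨s, hs, ?_⟩
    have hip : i < (e.symm s : ℕ) :=
      (hi : i < S.card).trans_le (not_lt.1 (mt Finset.mem_range.2 hp))
    rw [hswap ⟨i, him⟩ (e.symm s) hip hiS (by simpa), hY, Equiv.apply_symm_apply]
  · rintro ⟨s, hs, rfl⟩
    by_cases hp : ((e.symm s : Fin m) : ℕ) < S.card
    · exact ⟨_, hp, by rw [hY, Equiv.apply_symm_apply]⟩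
    obtain ⟨i, hi, hiT⟩ := Finset.exists_mem_notMem_of_card_le_card hT.le
      (Finset.mem_image_of_mem _ hs) (mt Finset.mem_range.1 hp)
    have hi' : i < S.card := Finset.mem_range.1 hi
    refine ⟨i, hi', ?_⟩
    rw [hswap ⟨i, hi'.trans_le hSm⟩ (e.symm s) (hi'.trans_le (not_lt.1 hp))
      (fun h => hiT ((hmemT _).2 h)) (by simpa), hY, Equiv.apply_symm_apply]

lemma apply_ne_of_mem_diagGon {N s : ℕ} {V : ZMod N → ℂ} {P : ℂ} (hP : P ∈ DiagGon V s)
    (j : ZMod N) : V j ≠ P := by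
  rintro rfl
  simpa [cross_def] using hP j

/-- The labels of `B₋ = -B` and of the arc `V k, …, V (k + n - 2)` among the marked points. -/
def lowerLabels (n : ℕ) (k : ZMod (2 * (n - 1))) : Finset (ZMod (2 * (n - 1)) ⊕ Fin 2) :=
  insert (Sum.inr 1)
    ((Finset.range (n - 1)).image fun i : ℕ => Sum.inl (k + (i : ZMod (2 * (n - 1)))))

lemma card_lowerLabels {n : ℕ} (hn : 2 ≤ n) (k : ZMod (2 * (n - 1))) :
    (lowerLabels n k).card = n := by
  classical
  rw [lowerLabels, Finset.card_insert_of_notMem (by simp), Finset.card_image_of_injOn,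
    Finset.card_range]
  · omega
  · intro i hi j hj hij
    simp only [Finset.coe_range, Set.mem_Iio, Sum.inl.injEq, add_right_inj] at hi hj hij
    exact (ZMod.natCast_eq_natCast_iff_of_lt (by omega) (by omega)).1 hij

lemma lexKey_dPoints_le_of_mem_lowerLabels {n : ℕ} {V : ZMod (2 * (n - 1)) → ℂ} {B : ℂ}
    (hn : 2 ≤ n) (hB : cLe (-B) B) {k : ZMod (2 * (n - 1))}
    (hk : ∀ i < 2 * (n - 1), lexKey (V (k + i)) < 0 ↔ i < n - 1)
    {s t : ZMod (2 * (n - 1)) ⊕ Fin 2} (hs : s ∈ lowerLabels n k) (ht : t ∉ lowerLabels n k) :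
    lexKey (DPoints n V B s) ≤ lexKey (DPoints n V B t) := by
  have : NeZero (2 * (n - 1)) := ⟨by omega⟩
  have hB₀ : 0 ≤ lexKey B := neg_le_self_iff.1 (by rwa [cLe_iff_lexKey_le, lexKey_neg] at hB)
  refine le_trans (b := 0) ?_ ?_
  · simp only [lowerLabels, Finset.mem_insert, Finset.mem_image, Finset.mem_range] at hs
    rcases hs with rfl | ⟨i, hi, rfl⟩
    · simpa [DPoints, lexKey_neg] using hB₀
    · exact ((hk i (by omega)).2 hi).le
  · rcases t with j | b
    · have hj : j = k + ((j - k).val : ZMod (2 * (n - 1))) := by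
        rw [ZMod.natCast_zmod_val, add_sub_cancel]
      have hjk : ¬ (j - k).val < n - 1 := fun h =>
        ht (Finset.mem_insert_of_mem
          (Finset.mem_image.2 ⟨_, Finset.mem_range.2 h, congrArg Sum.inl hj.symm⟩))
      rw [DPoints, Sum.elim_inl, hj]
      exact not_lt.1 (mt (hk _ (ZMod.val_lt _)).1 hjk)
    · obtain rfl : b = 0 := by
        have : b ≠ 1 := fun h => ht (h ▸ Finset.mem_insert_self _ _)
        omega
      simpa [DPoints] using hB₀

lemma DEnum.image_lt_eq {n : ℕ} {V : ZMod (2 * (n - 1)) → ℂ} {B : ℂ} {Y : ℕ → ℂ}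
    {e : Fin (2 * n) ≃ (ZMod (2 * (n - 1)) ⊕ Fin 2)} (henum : DEnum n V B Y e) (hn : 2 ≤ n)
    (hB : cLe (-B) B) {k : ZMod (2 * (n - 1))}
    (hk : ∀ i < 2 * (n - 1), lexKey (V (k + i)) < 0 ↔ i < n - 1) :
    Y '' {i | i < n} = insert (-B) ((fun i : ℕ => V (k + i)) '' {i | i < n - 1}) := by
  have key := image_lt_card_eq_image_of_sorted e (f := lexKey ∘ DPoints n V B)
    (Y := lexKey ∘ Y) (fun i => congrArg lexKey (henum.1 i))
    (fun i j hij hj => cLe_iff_lexKey_le.1 (henum.2 i j hij hj))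
    fun _ hs _ ht => lexKey_dPoints_le_of_mem_lowerLabels hn hB hk hs ht
  rw [card_lowerLabels hn, Set.image_comp, Set.image_comp] at key
  rw [lexKey_injective.image_injective key]
  simp only [lowerLabels, DPoints, Finset.coe_insert, Finset.coe_image, Finset.coe_range,
    Set.image_insert_eq, Set.image_image, Sum.elim_inl, Sum.elim_inr, one_ne_zero, if_false]
  rfl

/-- The vertices of the polygon `∇ₙ^±` of the paper, with `m = n - 1` and `P = B₊` or `B₋`. -/
def nabla {N : ℕ} (V : ZMod N → ℂ) (k : ZMod N) (m : ℕ) (P : ℂ) (i : ℕ) : ℂ :=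
  if i < m then V (k + i) else P

lemma range_nabla {n N m : ℕ} (hmn : m < n) (V : ZMod N → ℂ) (k : ZMod N) (P : ℂ) :
    Set.range (fun x : ZMod n => nabla V k m P x.val)
      = insert P ((fun i : ℕ => V (k + i)) '' {i | i < m}) := by
  ext z
  simp only [Set.mem_range, Set.mem_insert_iff, Set.mem_image, Set.mem_ofPred_eq, nabla]
  constructor
  · rintro ⟨x, rfl⟩
    split_ifs with h
    exacts [Or.inr ⟨_, h, rfl⟩, Or.inl rfl]
  · rintro (rfl | ⟨i, hi, rfl⟩)
    · exact ⟨m, by rw [ZMod.val_cast_of_lt hmn, if_neg (lt_irrefl m)]⟩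
    · exact ⟨i, by rw [ZMod.val_cast_of_lt (hi.trans hmn), if_pos hi]⟩

lemma PosConvex.ccw_nabla {N s : ℕ} {V : ZMod N → ℂ} (hV : PosConvex V) (hs : 2 * s ≤ N)
    {P : ℂ} (hP : P ∈ DiagGon V s) (k : ZMod N) {m a b c : ℕ} (hm : m ≤ s + 1)
    (hab : a < b) (hbc : b < c) (hc : c ≤ m) :
    Ccw (nabla V k m P a) (nabla V k m P b) (nabla V k m P c) := by
  simp only [nabla, if_pos (hab.trans (hbc.trans_le hc)), if_pos (hbc.trans_le hc)]
  rcases hc.lt_or_eq with hc | rfl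
  · rw [if_pos hc]
    exact hV.ccw_of_lt_of_lt k hab hbc (by omega)
  · rw [if_neg (lt_irrefl c)]
    have := hV.ccw_of_mem_diagGon hs hP (k + a) (m := b - a) (by omega) (by omega)
    rwa [add_assoc, ← Nat.cast_add, Nat.add_sub_cancel' hab.le] at this

/-- Lemma 4.5: for a stable `2(n-1)`-gon of type `D_n` with its increasing enumeration
`Y 0, …, Y (2n-1)` of the `2n` marked points (so `Y 0, …, Y (n-1)` are the points
`Y_{-n}, …, Y_{-1}` of the paper), (i) the `n` points `Y_{-n}, …, Y_{-1}` form, in a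
suitable cyclic order, a positively convex `n`-gon `∇ₙ⁻`, and (ii) replacing `B₋ = -B`
by `B₊ = B` among them also yields a positively convex `n`-gon `∇ₙ⁺`. -/
theorem lemma_4_5 (n : ℕ) (hn : 4 ≤ n) (V : ZMod (2 * (n - 1)) → ℂ) (B : ℂ)
    (hst : IsStableDGon n V B) (Y : ℕ → ℂ)
    (e : Fin (2 * n) ≃ (ZMod (2 * (n - 1)) ⊕ Fin 2)) (henum : DEnum n V B Y e) :
    (∃ U : ZMod n → ℂ, PosConvex U ∧
      Set.range U = Y '' {i : ℕ | i < n}) ∧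
    (∃ U : ZMod n → ℂ, PosConvex U ∧
      Set.range U = (Y '' {i : ℕ | i < n} \ {-B}) ∪ {B}) := by
  obtain ⟨hV, hsym, hle, hBm, hBp⟩ := hst
  obtain ⟨k, hk⟩ := hsym.exists_arc_lexKey_neg hn hV
  have : NeZero n := ⟨by omega⟩
  have hconv {P : ℂ} (hP : P ∈ DiagGon V (n - 2)) :
      PosConvex (fun x : ZMod n => nabla V k (n - 1) P x.val) :=
    posConvex_of_ccw _ fun a b c hab hbc hc =>
      hV.ccw_nabla (by omega) hP k (by omega) hab hbc (by omega)
  rw [henum.image_lt_eq (by omega) hle hk]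
  refine ⟨⟨_, hconv hBm, range_nabla (by omega) V k _⟩, ⟨_, hconv hBp, ?_⟩⟩
  rw [range_nabla (by omega), Set.insert_sdiff_self_of_notMem, Set.union_singleton]
  rintro ⟨i, -, hi⟩
  exact apply_ne_of_mem_diagGon hBm _ hi
end
end

section
/- Lemma 4.7: Let (V₀, …, V₁₁) be any 12-gon of type E6 (the linear relations alone suffice; no convexity is needed) with inner points W_j = V_j + z_{j+4}. Then V₈ − V₇ = W₄ − V₄ = W₁ − W₃ and V₉ − V₈ = W₂ − W₄ = V₀ − W₁. Consequently, the triangles △_L with vertices (W₃, W₁, V₀), △_R with vertices (V₄, W₄, W₂), and △₀ with vertices (V₇, V₈, V₉) are pairwise translates of one another (in particular △_R = △_L + c with c = V₄ − W₃ = W₄ − W₁ = W₂ − V₀). -/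
noncomputable section

/-- Lemma 4.7: in any 12-gon of type `E6` (only the linear relations are used),
`V 8 − V 7 = W 4 − V 4 = W 1 − W 3` and `V 9 − V 8 = W 2 − W 4 = V 0 − W 1`; hence the
triangles `△_L = (W 3, W 1, V 0)`, `△_R = (V 4, W 4, W 2)` and `△₀ = (V 7, V 8, V 9)` are
pairwise translates of one another. -/
theorem lemma_4_7 (V : ZMod 12 → ℂ) (hV : IsE6Gon V) :
    (V 8 - V 7 = WE6 V 4 - V 4 ∧ WE6 V 4 - V 4 = WE6 V 1 - WE6 V 3) ∧
    (V 9 - V 8 = WE6 V 2 - WE6 V 4 ∧ WE6 V 2 - WE6 V 4 = V 0 - WE6 V 1) ∧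
    (∃ c : ℂ, c = V 4 - WE6 V 3 ∧ c = WE6 V 4 - WE6 V 1 ∧ c = WE6 V 2 - V 0 ∧
      V 4 = WE6 V 3 + c ∧ WE6 V 4 = WE6 V 1 + c ∧ WE6 V 2 = V 0 + c) ∧
    (∃ d : ℂ, V 7 = WE6 V 3 + d ∧ V 8 = WE6 V 1 + d ∧ V 9 = V 0 + d) := by
  have e0 : (V 0 - V 11) + (V 4 - V 3) + (V 8 - V 7) = 0 := by
    have h := (hV 0).1
    simp only [zEdge, show ((0:ZMod 12)+4)=4 by decide, show ((0:ZMod 12)+8)=8 by decide,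
      show ((0:ZMod 12)-1)=11 by decide, show ((4:ZMod 12)-1)=3 by decide,
      show ((8:ZMod 12)-1)=7 by decide] at h
    linear_combination h
  have e1 : (V 1 - V 0) + (V 5 - V 4) + (V 9 - V 8) = 0 := by
    have h := (hV 1).1
    simp only [zEdge, show ((1:ZMod 12)+4)=5 by decide, show ((1:ZMod 12)+8)=9 by decide,
      show ((1:ZMod 12)-1)=0 by decide, show ((5:ZMod 12)-1)=4 by decide,
      show ((9:ZMod 12)-1)=8 by decide] at h
    linear_combination h
  have e2 : (V 2 - V 1) + (V 6 - V 5) + (V 10 - V 9) = 0 := by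
    have h := (hV 2).1
    simp only [zEdge, show ((2:ZMod 12)+4)=6 by decide, show ((2:ZMod 12)+8)=10 by decide,
      show ((2:ZMod 12)-1)=1 by decide, show ((6:ZMod 12)-1)=5 by decide,
      show ((10:ZMod 12)-1)=9 by decide] at h
    linear_combination h
  have f0 : (V 0 - V 11) - (V 9 - V 8) + (V 6 - V 5) - (V 3 - V 2) = 0 := by
    have h := (hV 0).2
    simp only [zEdge, show ((0:ZMod 12)-3)=9 by decide, show ((0:ZMod 12)-6)=6 by decide,
      show ((0:ZMod 12)-9)=3 by decide, show ((0:ZMod 12)-1)=11 by decide,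
      show ((9:ZMod 12)-1)=8 by decide, show ((6:ZMod 12)-1)=5 by decide,
      show ((3:ZMod 12)-1)=2 by decide] at h
    linear_combination h
  have f1 : (V 1 - V 0) - (V 10 - V 9) + (V 7 - V 6) - (V 4 - V 3) = 0 := by
    have h := (hV 1).2
    simp only [zEdge, show ((1:ZMod 12)-3)=10 by decide, show ((1:ZMod 12)-6)=7 by decide,
      show ((1:ZMod 12)-9)=4 by decide, show ((1:ZMod 12)-1)=0 by decide,
      show ((10:ZMod 12)-1)=9 by decide, show ((7:ZMod 12)-1)=6 by decide,
      show ((4:ZMod 12)-1)=3 by decide] at h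
    linear_combination h
  simp only [WE6, zEdge, show ((4:ZMod 12)+4)=8 by decide, show ((1:ZMod 12)+4)=5 by decide,
    show ((3:ZMod 12)+4)=7 by decide, show ((2:ZMod 12)+4)=6 by decide,
    show ((8:ZMod 12)-1)=7 by decide, show ((5:ZMod 12)-1)=4 by decide,
    show ((7:ZMod 12)-1)=6 by decide, show ((6:ZMod 12)-1)=5 by decide]
  refine ⟨⟨by ring, by linear_combination e0 - f0 - e1 + f1 + e2⟩,
    ⟨by linear_combination e0 - f0, by linear_combination -e0 + f0 + e1⟩,
    ⟨V 4 - (V 3 + (V 7 - V 6)), rfl, by linear_combination -e0 + f0 + e1 - f1 - e2,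
      by linear_combination -f1 - e2, by ring, by linear_combination e0 - f0 - e1 + f1 + e2,
      by linear_combination f1 + e2⟩,
    ⟨V 7 - (V 3 + (V 7 - V 6)), by ring, by linear_combination e0 - f0 - e1 + f1 + e2,
      by linear_combination e0 - f0 + f1 + e2⟩⟩
end
end
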